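/- arXiv:2509.25507 — 2 statements merged into one kernel-verified Lean document; each statement's English description precedes it below -/
import Mathlib

section
/- Let $X_1, \ldots, X_n$ be points in $\mathbb{R}^d$ in general position (all pairwise distances distinct), and let $G$ be the directed $k$-nearest neighbor graph (each vertex has out-degree exactly $k$). Then there exists a constant $C_d$ depending only on $d$ such that the in-degree of every vertex in $G$ is at most $C_d \, k$; consequently the total degree (in-degree plus out-degree) of every vertex is at most $(C_d + 1)k$. -/
open Finset

/-- Directed `k`-nearest-neighbor edge relation: `i → j` iff `j ≠ i` and `j` is among
the `k` nearest points to `X i` (i.e. at most `k` points `l ≠ i` are at distance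
`≤ dist (X i) (X j)` from `X i`). -/
noncomputable def knnEdge {n d : ℕ} (X : Fin n → EuclideanSpace ℝ (Fin d)) (k : ℕ)
    (i j : Fin n) : Prop :=
  i ≠ j ∧
    (Finset.univ.filter fun l =>
      l ≠ i ∧ dist (X i) (X l) ≤ dist (X i) (X j)).card ≤ k

noncomputable instance {n d : ℕ} (X : Fin n → EuclideanSpace ℝ (Fin d)) (k : ℕ) :
    DecidableRel (knnEdge X k) := fun _ _ => Classical.propDecidable _

/-!
Cover the closed unit ball by finitely many balls of radius `1/2` with centres in a finite set
`F`, and sort the in-neighbours `i` of `j` by a centre near the direction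
`‖X i - X j‖⁻¹ • (X i - X j)` (the ball rather than the sphere, as a point at `X j` has
direction `0`). Two directions near the same centre make an angle below `π/3`, so if `m` is the
member of a class farthest from `X j`, every other member of the class, and `j` itself, is at
distance at most `dist (X m) (X j)` from `X m`. Since `j` is among the `k` nearest neighbours of
`X m`, a class has at most `k` members, and the in-degree is at most `#F * k`.
-/

open Metric

section Geometry

variable {E : Type*} [NormedAddCommGroup E]

lemma norm_inv_norm_smul_le_one [NormedSpace ℝ E] (v : E) : ‖‖v‖⁻¹ • v‖ ≤ 1 := by
  rcases eq_or_ne v 0 with rfl | hv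
  · simp
  · exact (norm_smul_inv_norm (𝕜 := ℝ) hv).le

variable [InnerProductSpace ℝ E]

lemma norm_sub_le_of_dist_inv_norm_smul_lt_one {v w : E} (hvw : ‖v‖ ≤ ‖w‖)
    (hdir : dist (‖v‖⁻¹ • v) (‖w‖⁻¹ • w) < 1) : ‖w - v‖ ≤ ‖w‖ := by
  rcases eq_or_ne v 0 with rfl | hv
  · simp
  have hv₀ : 0 < ‖v‖ := norm_pos_iff.2 hv
  have hw₀ : 0 < ‖w‖ := hv₀.trans_le hvw
  have hinner : ‖v‖ * ‖w‖ < 2 * inner ℝ v w := by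
    have hu : ‖‖v‖⁻¹ • v‖ = 1 := norm_smul_inv_norm (𝕜 := ℝ) hv
    have hu' : ‖‖w‖⁻¹ • w‖ = 1 := norm_smul_inv_norm (𝕜 := ℝ) (norm_pos_iff.1 hw₀)
    have h := norm_sub_sq_real (‖v‖⁻¹ • v) (‖w‖⁻¹ • w)
    rw [hu, hu', real_inner_smul_left, real_inner_smul_right, ← dist_eq_norm] at h
    have hsq := pow_lt_one₀ dist_nonneg hdir two_ne_zero
    have hcos : 1 < 2 * (‖v‖⁻¹ * (‖w‖⁻¹ * inner ℝ v w)) := by linarith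
    field_simp at hcos
    linarith
  have hsq : ‖w - v‖ ^ 2 ≤ ‖w‖ ^ 2 := by
    rw [norm_sub_sq_real, real_inner_comm]
    nlinarith
  exact pow_le_pow_iff_left₀ (norm_nonneg _) (norm_nonneg _) two_ne_zero |>.1 hsq

lemma dist_le_of_dist_inv_norm_smul_lt_one {p x y : E} (hxy : dist p x ≤ dist p y)
    (hdir : dist (‖x - p‖⁻¹ • (x - p)) (‖y - p‖⁻¹ • (y - p)) < 1) : dist y x ≤ dist y p := by
  rw [dist_comm p x, dist_comm p y, dist_eq_norm, dist_eq_norm] at hxy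
  simpa [dist_eq_norm] using norm_sub_le_of_dist_inv_norm_smul_lt_one hxy hdir

end Geometry

section KNN

variable {n d k : ℕ}

lemma knnEdge.card_le {X : Fin n → EuclideanSpace ℝ (Fin d)} {i j : Fin n}
    (h : knnEdge X k i j) {S : Finset (Fin n)}
    (hS : ∀ l ∈ S, l ≠ i ∧ dist (X i) (X l) ≤ dist (X i) (X j)) : #S ≤ k :=
  (card_le_card fun l hl => mem_filter.2 ⟨mem_univ l, hS l hl⟩).trans h.2

variable (X : Fin n → EuclideanSpace ℝ (Fin d))

lemma card_filter_knnEdge_le (i : Fin n) : #{j | knnEdge X k i j} ≤ k := by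
  obtain hempty | hne := (univ.filter (knnEdge X k i)).eq_empty_or_nonempty
  · simp [hempty]
  obtain ⟨m, hm, hfar⟩ := exists_max_image _ (fun j => dist (X i) (X j)) hne
  exact (mem_filter.1 hm).2.card_le fun l hl => ⟨(mem_filter.1 hl).2.1.symm, hfar l hl⟩

lemma card_le_of_forall_knnEdge {j : Fin n} {T : Finset (Fin n)}
    (hT : ∀ i ∈ T, knnEdge X k i j)
    (hcone : ∀ s ∈ T, ∀ m ∈ T, dist (X j) (X s) ≤ dist (X j) (X m) →
      dist (X m) (X s) ≤ dist (X m) (X j)) : #T ≤ k := by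
  obtain rfl | hne := T.eq_empty_or_nonempty
  · simp
  obtain ⟨m, hm, hfar⟩ := T.exists_max_image (fun i => dist (X j) (X i)) hne
  have hjT : j ∉ T := fun hj => (hT j hj).1 rfl
  calc #T = #(insert j (T.erase m)) := by
        rw [card_insert_of_notMem fun h => hjT (mem_of_mem_erase h), card_erase_add_one hm]
    _ ≤ k := (hT m hm).card_le fun l hl => by
        rcases mem_insert.1 hl with rfl | hl
        · exact ⟨(hT m hm).1.symm, le_rfl⟩
        · have hlT := mem_of_mem_erase hl
          exact ⟨ne_of_mem_erase hl, hcone l hlT m hm (hfar l hlT)⟩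

lemma card_filter_knnEdge_in_le {F : Finset (EuclideanSpace ℝ (Fin d))}
    (hF : closedBall 0 1 ⊆ ⋃ c ∈ F, ball c (1 / 2)) (j : Fin n) :
    #{i | knnEdge X k i j} ≤ #F * k := by
  classical
  have hdir : ∀ i, ∃ c ∈ F, dist (‖X i - X j‖⁻¹ • (X i - X j)) c < 1 / 2 := fun i => by
    simpa using hF (mem_closedBall_zero_iff.2 (norm_inv_norm_smul_le_one (X i - X j)))
  choose g hgF hg using hdir
  rw [mul_comm]
  refine card_le_mul_card_image_of_maps_to (fun i _ => hgF i) k fun c _ => ?_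
  refine card_le_of_forall_knnEdge X (fun i hi => (mem_filter.1 (mem_filter.1 hi).1).2) ?_
  intro s hs m hm hsm
  have hgs : g s = c := (mem_filter.1 hs).2
  have hgm : g m = c := (mem_filter.1 hm).2
  refine dist_le_of_dist_inv_norm_smul_lt_one hsm ?_
  calc _ ≤ _ := dist_triangle_right _ _ c
    _ < 1 / 2 + 1 / 2 := add_lt_add (hgs ▸ hg s) (hgm ▸ hg m)
    _ = 1 := by norm_num

end KNN

/-- In the directed `k`-NN graph on points in general position in
`ℝ^d`, there is a constant `C_d` depending only on `d` such that every vertex has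
in-degree at most `C_d k`, and hence total degree at most `(C_d + 1) k`. -/
theorem stmt_7 (d : ℕ) :
    ∃ C : ℕ, 0 < C ∧
      ∀ (n k : ℕ), 1 ≤ k →
        ∀ X : Fin n → EuclideanSpace ℝ (Fin d),
          (∀ i j i' j' : Fin n, i ≠ j → i' ≠ j' →
            dist (X i) (X j) = dist (X i') (X j') →
            ({i, j} : Set (Fin n)) = {i', j'}) →
          ∀ j : Fin n,
            (Finset.univ.filter fun i => knnEdge X k i j).card ≤ C * k ∧
            (Finset.univ.filter fun i => knnEdge X k i j).card +
              (Finset.univ.filter fun i => knnEdge X k j i).card ≤ (C + 1) * k := by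
  obtain ⟨F, hF⟩ := (isCompact_closedBall (0 : EuclideanSpace ℝ (Fin d)) 1).elim_finite_subcover
    (fun c => ball c (1 / 2)) (fun _ => isOpen_ball)
    fun v _ => Set.mem_iUnion.2 ⟨v, mem_ball_self (by norm_num)⟩
  obtain ⟨c, hc, -⟩ := Set.mem_iUnion₂.1 (hF (mem_closedBall_self zero_le_one))
  refine ⟨#F, card_pos.2 ⟨c, hc⟩, fun n k _ X _ j => ⟨card_filter_knnEdge_in_le X hF j, ?_⟩⟩
  rw [add_mul, one_mul]
  exact add_le_add (card_filter_knnEdge_in_le X hF j) (card_filter_knnEdge_le X j)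
end

section
/- Let $\psi: \mathbb{R}^p \to \mathbb{R}$ be a continuous positive definite function, let $\Lambda$ be the finite nonnegative Borel measure from Bochner's theorem with $\psi(x) = \int e^{-\iota x^\top \omega} d\Lambda(\omega)$, and set $\mathsf{K}(x,y) = \psi(x-y)$. Then for any two Borel probability measures $P, Q$ on $\mathbb{R}^p$ with characteristic functions $\phi_P, \phi_Q$, the MMD satisfies $\|\mu_P - \mu_Q\|_{\mathcal{K}}^2 = \int_{\mathbb{R}^p} |\phi_P(\omega) - \phi_Q(\omega)|^2 \, d\Lambda(\omega)$. -/
open MeasureTheory Complex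

open scoped ComplexConjugate RealInnerProductSpace

/-! Bochner's representation makes the kernel `⟪φ x, φ y⟫ = ∫ conj (e_ω x) * e_ω y dΛ(ω)` with
`e_ω x = exp (i⟪x, ω⟫)`. Integrating `x` against `μ` and `y` against `ν` and pulling the
`Λ`-integral outside (Fubini; every integrand is bounded and all measures are finite) gives
`⟪∫ φ dμ, ∫ φ dν⟫ = ∫ conj (charFun μ) * charFun ν dΛ`. Expanding `‖∫ φ dP - ∫ φ dQ‖²` and
`|charFun P - charFun Q|²` bilinearly, the four terms match. -/

section KernelMeanEmbedding

variable {E : Type*} [NormedAddCommGroup E] [InnerProductSpace ℝ E]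

lemma exp_neg_I_mul_inner_sub (x y ω : E) :
    exp (-I * ⟪x - y, ω⟫) = conj (exp (⟪x, ω⟫ * I)) * exp (⟪y, ω⟫ * I) := by
  rw [← exp_conj, ← exp_add, inner_sub_left]
  simp only [map_mul, conj_ofReal, conj_I]
  push_cast
  ring_nf

variable [MeasurableSpace E]

lemma charFun_eq_integral_exp_I_mul_inner (μ : Measure E) (t : E) :
    charFun μ t = ∫ y, exp (I * ⟪t, y⟫) ∂μ := by
  simp only [charFun_apply, real_inner_comm t, mul_comm I]

variable [BorelSpace E] [SecondCountableTopology E]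

lemma integrable_conj_charFun_mul_charFun {Λ μ ν : Measure E} [IsFiniteMeasure Λ]
    [IsFiniteMeasure μ] [IsFiniteMeasure ν] :
    Integrable (fun ω => conj (charFun μ ω) * charFun ν ω) Λ :=
  .of_bound (by fun_prop) (μ.real Set.univ * ν.real Set.univ) <| ae_of_all _ fun ω => by
    rw [norm_mul, RCLike.norm_conj]
    exact mul_le_mul (norm_charFun_le ω) (norm_charFun_le ω) (norm_nonneg _) (by positivity)

variable {H : Type*} [NormedAddCommGroup H] [InnerProductSpace ℝ H] [CompleteSpace H]
  {Λ : Measure E} [IsFiniteMeasure Λ] {φ : E → H}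

theorem inner_integral_eq_integral_conj_charFun_mul_charFun
    (hφ : ∀ x y, (⟪φ x, φ y⟫ : ℂ) = ∫ ω, conj (exp (⟪x, ω⟫ * I)) * exp (⟪y, ω⟫ * I) ∂Λ)
    {μ ν : Measure E} [IsFiniteMeasure μ] [IsFiniteMeasure ν]
    (hμ : Integrable φ μ) (hν : Integrable φ ν) :
    (⟪∫ x, φ x ∂μ, ∫ y, φ y ∂ν⟫ : ℂ) = ∫ ω, conj (charFun μ ω) * charFun ν ω ∂Λ := by
  have inner_integral : ⟪∫ x, φ x ∂μ, ∫ y, φ y ∂ν⟫ = ∫ x, ∫ y, ⟪φ x, φ y⟫ ∂ν ∂μ := by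
    rw [real_inner_comm, ← integral_inner hμ]
    congr 1 with x
    rw [real_inner_comm, ← integral_inner hν]
  have swap_y_ω (x : E) : ∫ y, ∫ ω, conj (exp (⟪x, ω⟫ * I)) * exp (⟪y, ω⟫ * I) ∂Λ ∂ν =
      ∫ ω, ∫ y, conj (exp (⟪x, ω⟫ * I)) * exp (⟪y, ω⟫ * I) ∂ν ∂Λ :=
    integral_integral_swap <| .of_bound (by fun_prop) 1 <| ae_of_all _ fun q => by
      simp only [Function.uncurry, norm_mul, RCLike.norm_conj, norm_exp_ofReal_mul_I, mul_one,
        le_refl]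
  have swap_x_ω : ∫ x, ∫ ω, conj (exp (⟪x, ω⟫ * I)) * charFun ν ω ∂Λ ∂μ =
      ∫ ω, ∫ x, conj (exp (⟪x, ω⟫ * I)) * charFun ν ω ∂μ ∂Λ :=
    integral_integral_swap <| .of_bound (by fun_prop) (ν.real Set.univ) <|
      ae_of_all _ fun q => by
        simpa only [Function.uncurry, norm_mul, RCLike.norm_conj, norm_exp_ofReal_mul_I, one_mul]
          using norm_charFun_le q.2
  calc (⟪∫ x, φ x ∂μ, ∫ y, φ y ∂ν⟫ : ℂ)
      = ∫ x, ∫ y, ∫ ω, conj (exp (⟪x, ω⟫ * I)) * exp (⟪y, ω⟫ * I) ∂Λ ∂ν ∂μ := by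
        simp_rw [inner_integral, ← integral_complex_ofReal, hφ]
    _ = ∫ x, ∫ ω, conj (exp (⟪x, ω⟫ * I)) * charFun ν ω ∂Λ ∂μ := by
        simp_rw [swap_y_ω, integral_const_mul, charFun_apply]
    _ = ∫ ω, conj (charFun μ ω) * charFun ν ω ∂Λ := by
        simp_rw [swap_x_ω, integral_mul_const, integral_conj, charFun_apply]

theorem norm_integral_sub_integral_sq_eq_integral_norm_charFun_sub_sq
    (hφ : ∀ x y, (⟪φ x, φ y⟫ : ℂ) = ∫ ω, conj (exp (⟪x, ω⟫ * I)) * exp (⟪y, ω⟫ * I) ∂Λ)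
    {P Q : Measure E} [IsFiniteMeasure P] [IsFiniteMeasure Q]
    (hP : Integrable φ P) (hQ : Integrable φ Q) :
    ‖∫ x, φ x ∂P - ∫ x, φ x ∂Q‖ ^ 2 = ∫ ω, ‖charFun P ω - charFun Q ω‖ ^ 2 ∂Λ := by
  apply ofReal_injective
  calc ((‖∫ x, φ x ∂P - ∫ x, φ x ∂Q‖ ^ 2 : ℝ) : ℂ)
      = (⟪∫ x, φ x ∂P, ∫ x, φ x ∂P⟫ : ℂ) - ⟪∫ x, φ x ∂P, ∫ x, φ x ∂Q⟫
          - (⟪∫ x, φ x ∂Q, ∫ x, φ x ∂P⟫ - ⟪∫ x, φ x ∂Q, ∫ x, φ x ∂Q⟫) := by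
        rw [← real_inner_self_eq_norm_sq, inner_sub_left, inner_sub_right, inner_sub_right]
        push_cast
        ring
    _ = ∫ ω, conj (charFun P ω - charFun Q ω) * (charFun P ω - charFun Q ω) ∂Λ := by
        simp only [inner_integral_eq_integral_conj_charFun_mul_charFun hφ, hP, hQ]
        rw [← integral_sub, ← integral_sub, ← integral_sub]
        · congr 1 with ω
          rw [map_sub]
          ring
        all_goals apply_rules [Integrable.sub, integrable_conj_charFun_mul_charFun]
    _ = ((∫ ω, ‖charFun P ω - charFun Q ω‖ ^ 2 ∂Λ : ℝ) : ℂ) := by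
        simp_rw [conj_mul']
        norm_cast

end KernelMeanEmbedding

theorem stmt_14_general {p : ℕ}
    (ψ : EuclideanSpace ℝ (Fin p) → ℝ)
    (Λ : Measure (EuclideanSpace ℝ (Fin p))) [IsFiniteMeasure Λ]
    (hBochner : ∀ x, (ψ x : ℂ) =
      ∫ ω, Complex.exp (-Complex.I * ((inner ℝ x ω : ℝ) : ℂ)) ∂Λ)
    {H : Type*} [NormedAddCommGroup H] [InnerProductSpace ℝ H] [CompleteSpace H]
    (φ : EuclideanSpace ℝ (Fin p) → H)
    (hfeat : ∀ x y, ψ (x - y) = inner ℝ (φ x) (φ y))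
    (P Q : Measure (EuclideanSpace ℝ (Fin p)))
    [IsProbabilityMeasure P] [IsProbabilityMeasure Q]
    (hφP : Integrable φ P) (hφQ : Integrable φ Q)
    (μP μQ : H) (hμP : μP = ∫ y, φ y ∂P) (hμQ : μQ = ∫ y, φ y ∂Q)
    (charP charQ : EuclideanSpace ℝ (Fin p) → ℂ)
    (hcharP : ∀ ω, charP ω = ∫ y, Complex.exp (Complex.I * ((inner ℝ ω y : ℝ) : ℂ)) ∂P)
    (hcharQ : ∀ ω, charQ ω = ∫ y, Complex.exp (Complex.I * ((inner ℝ ω y : ℝ) : ℂ)) ∂Q) :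
    ‖μP - μQ‖ ^ 2 = ∫ ω, ‖charP ω - charQ ω‖ ^ 2 ∂Λ := by
  have hkernel (x y : EuclideanSpace ℝ (Fin p)) : (⟪φ x, φ y⟫ : ℂ) =
      ∫ ω, conj (exp (⟪x, ω⟫ * I)) * exp (⟪y, ω⟫ * I) ∂Λ := by
    simp_rw [← hfeat, hBochner, exp_neg_I_mul_inner_sub]
  obtain rfl : charP = charFun P := funext fun ω => by
    rw [hcharP, charFun_eq_integral_exp_I_mul_inner]
  obtain rfl : charQ = charFun Q := funext fun ω => by
    rw [hcharQ, charFun_eq_integral_exp_I_mul_inner]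
  rw [hμP, hμQ]
  exact norm_integral_sub_integral_sq_eq_integral_norm_charFun_sub_sq hkernel hφP hφQ

/-- Corollary 4 of Sriperumbudur et al. (2010). For a continuous
positive definite function `ψ` on `ℝ^p` with Bochner measure `Λ`
(`ψ(x) = ∫ e^{-i xᵀω} dΛ(ω)`), kernel `K(x,y) = ψ(x-y)` with feature map `φ` into
its RKHS, and Borel probability measures `P, Q` with characteristic functions
`φ_P, φ_Q`, the MMD satisfies
`‖μ_P - μ_Q‖² = ∫ |φ_P(ω) - φ_Q(ω)|² dΛ(ω)`. -/
theorem stmt_14 {p : ℕ}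
    (ψ : EuclideanSpace ℝ (Fin p) → ℝ) (hψcont : Continuous ψ)
    (Λ : Measure (EuclideanSpace ℝ (Fin p))) [IsFiniteMeasure Λ]
    (hBochner : ∀ x, (ψ x : ℂ) =
      ∫ ω, Complex.exp (-Complex.I * ((inner ℝ x ω : ℝ) : ℂ)) ∂Λ)
    {H : Type*} [NormedAddCommGroup H] [InnerProductSpace ℝ H] [CompleteSpace H]
    (φ : EuclideanSpace ℝ (Fin p) → H)
    (hfeat : ∀ x y, ψ (x - y) = inner ℝ (φ x) (φ y))
    (P Q : Measure (EuclideanSpace ℝ (Fin p)))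
    [IsProbabilityMeasure P] [IsProbabilityMeasure Q]
    (hφP : Integrable φ P) (hφQ : Integrable φ Q)
    (μP μQ : H) (hμP : μP = ∫ y, φ y ∂P) (hμQ : μQ = ∫ y, φ y ∂Q)
    (charP charQ : EuclideanSpace ℝ (Fin p) → ℂ)
    (hcharP : ∀ ω, charP ω = ∫ y, Complex.exp (Complex.I * ((inner ℝ ω y : ℝ) : ℂ)) ∂P)
    (hcharQ : ∀ ω, charQ ω = ∫ y, Complex.exp (Complex.I * ((inner ℝ ω y : ℝ) : ℂ)) ∂Q) :
    ‖μP - μQ‖ ^ 2 = ∫ ω, ‖charP ω - charQ ω‖ ^ 2 ∂Λ :=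
  stmt_14_general ψ Λ hBochner φ hfeat P Q hφP hφQ μP μQ hμP hμQ charP charQ hcharP hcharQ
end
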